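/- arXiv:2001.09609 — 5 statements merged into one kernel-verified Lean document; each statement's English description precedes it below -/
import Mathlib

section
/- Let G be a σ-compact locally compact group with Haar measure μ_G, and fix a symmetric open relatively compact unit neighborhood Q. Let Φ, Ψ : G → [0,∞) be continuous and let Λ be a relatively separated family in G. Then for all x, y ∈ G: Σ_{λ∈Λ} Φ(λ⁻¹x) Ψ(y⁻¹λ) ≤ (Rel(Λ)/μ_G(Q)) · (M_Q Ψ ∗ M_Q^R Φ)(y⁻¹x), where M_Q Ψ(z) = sup_{u∈zQ} Ψ(u), M_Q^R Φ(z) = sup_{u∈Qz} Φ(u), and ∗ denotes convolution on G. -/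
/-!
Every term `Φ(λ⁻¹x) Ψ(y⁻¹λ)` is dominated by `M_Q Ψ(t) · M_Q^R Φ(t⁻¹y⁻¹x)` at every point `t` of
the tile `y⁻¹λQ`, hence by the average of this integrand over the tile, which has measure `μ(Q)`.
As `Q` is symmetric, `t` lies in the tile of `λ` iff `λ ∈ ytQ`, so at most `Rel(Λ)` tiles overlap
at any point, and summing the averages costs at most that factor.
-/

open MeasureTheory Measure
open scoped Pointwise ENNReal

open Finset in
theorem sum_indicator_le_mul_of_encard_le {α ι : Type*} {S : ι → Set α} {t : α} {N : ℕ}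
    (hN : {i | t ∈ S i}.encard ≤ N) {c : ι → ℝ≥0∞} {F : α → ℝ≥0∞}
    (hcF : ∀ i, t ∈ S i → c i ≤ F t) (s : Finset ι) :
    ∑ i ∈ s, (S i).indicator (fun _ => c i) t ≤ N * F t := by
  classical
  have hcard : #{i ∈ s | t ∈ S i} ≤ N := by
    have := (Set.encard_le_encard (s := ({i ∈ s | t ∈ S i} : Finset ι)) (t := {i | t ∈ S i})
      (by intro i; simp)).trans hN
    rw [Set.encard_coe_eq_coe_finsetCard] at this
    exact_mod_cast this
  calc ∑ i ∈ s, (S i).indicator (fun _ => c i) t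
      ≤ ∑ i ∈ s with t ∈ S i, F t := by
        rw [sum_filter]
        gcongr with i
        by_cases h : t ∈ S i <;> simp [h, hcF i]
    _ = #{i ∈ s | t ∈ S i} * F t := by rw [sum_const, nsmul_eq_mul]
    _ ≤ N * F t := by gcongr

theorem tsum_le_div_mul_lintegral_of_le_on_tiles {α ι : Type*} [MeasurableSpace α]
    (μ : Measure α) {S : ι → Set α} (hS : ∀ i, MeasurableSet (S i)) {m : ℝ≥0∞}
    (hm0 : m ≠ 0) (hm : m ≠ ∞) (hμS : ∀ i, m ≤ μ (S i)) {N : ℕ}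
    (hN : ∀ t, {i | t ∈ S i}.encard ≤ N) {c : ι → ℝ≥0∞} {F : α → ℝ≥0∞}
    (hcF : ∀ i, ∀ t ∈ S i, c i ≤ F t) :
    ∑' i, c i ≤ N / m * ∫⁻ t, F t ∂μ := by
  refine ENNReal.summable.tsum_le_of_sum_le fun s => ?_
  rw [← ENNReal.mul_div_right_comm, ENNReal.le_div_iff_mul_le (.inl hm0) (.inl hm)]
  calc (∑ i ∈ s, c i) * m ≤ ∑ i ∈ s, c i * μ (S i) := by
        rw [Finset.sum_mul]; gcongr with i; exact hμS i
    _ = ∫⁻ t, ∑ i ∈ s, (S i).indicator (fun _ => c i) t ∂μ := by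
        rw [lintegral_finsetSum _ fun i _ => measurable_const.indicator (hS i)]
        simp [lintegral_indicator_const (hS _)]
    _ ≤ ∫⁻ t, N * F t ∂μ :=
        lintegral_mono fun t => sum_indicator_le_mul_of_encard_le (hN t) (fun i => hcF i t) s
    _ = N * ∫⁻ t, F t ∂μ := lintegral_const_mul' _ _ (ENNReal.natCast_ne_top N)

section Maximal

variable {G : Type*} [Group G]

noncomputable def leftMaximal (Q : Set G) (f : G → ℝ≥0∞) (t : G) : ℝ≥0∞ := ⨆ q ∈ Q, f (t * q)

noncomputable def rightMaximal (Q : Set G) (f : G → ℝ≥0∞) (t : G) : ℝ≥0∞ := ⨆ q ∈ Q, f (q * t)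

theorem mem_smul_comm_of_inv_eq {Q : Set G} (hQ : Q⁻¹ = Q) {a t : G} :
    t ∈ a • Q ↔ a ∈ t • Q := by
  rw [Set.mem_smul_set_iff_inv_smul_mem, ← Set.inv_mem_inv, hQ, smul_eq_mul, mul_inv_rev, inv_inv,
    ← smul_eq_mul, ← Set.mem_smul_set_iff_inv_smul_mem]

theorem le_leftMaximal_of_mem_smul {Q : Set G} (hQ : Q⁻¹ = Q) (f : G → ℝ≥0∞) {a t : G}
    (ht : t ∈ a • Q) : f a ≤ leftMaximal Q f t := by
  obtain ⟨q, hq, rfl⟩ := ht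
  have hq' : q⁻¹ ∈ Q := by rwa [← Set.mem_inv, hQ]
  calc f a = f (a * q * q⁻¹) := by rw [mul_inv_cancel_right]
    _ ≤ leftMaximal Q f (a * q) := le_iSup₂ (f := fun p _ => f (a * q * p)) q⁻¹ hq'

theorem apply_inv_mul_le_rightMaximal_of_mem_smul {Q : Set G} (f : G → ℝ≥0∞) {a t : G}
    (ht : t ∈ a • Q) (z : G) : f (a⁻¹ * z) ≤ rightMaximal Q f (t⁻¹ * z) := by
  obtain ⟨q, hq, rfl⟩ := ht
  calc f (a⁻¹ * z) = f (q * ((a * q)⁻¹ * z)) := by group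
    _ ≤ rightMaximal Q f ((a * q)⁻¹ * z) := le_iSup₂ (f := fun p _ => f (p * ((a * q)⁻¹ * z))) q hq

end Maximal

theorem sum_envelope_le_convolution_maximal_general
    {G : Type*} [Group G] [TopologicalSpace G] [IsTopologicalGroup G]
    [MeasurableSpace G] [BorelSpace G]
    (μ : Measure G) [μ.IsHaarMeasure]
    -- fixed symmetric open relatively compact unit neighborhood Q
    (Q : Set G) (hQopen : IsOpen Q) (hQone : (1 : G) ∈ Q) (hQsymm : Q⁻¹ = Q)
    (hQcomp : IsCompact (closure Q))
    -- continuous nonnegative (finite-valued) envelopes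
    (Φ Ψ : G → ℝ≥0∞)
    -- a relatively separated family with Rel(Λ) ≤ N
    {ι : Type*} (Λ : ι → G) (N : ℕ)
    (hsep : ∀ x : G, {i : ι | Λ i ∈ x • Q}.Finite ∧ {i : ι | Λ i ∈ x • Q}.ncard ≤ N)
    (x y : G) :
    ∑' i : ι, Φ ((Λ i)⁻¹ * x) * Ψ (y⁻¹ * Λ i)
      ≤ ((N : ℝ≥0∞) / μ Q) *
          ∫⁻ t, (⨆ q ∈ Q, Ψ (t * q)) * (⨆ q ∈ Q, Φ (q * (t⁻¹ * (y⁻¹ * x)))) ∂μ := by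
  have hcount (t : G) : {i | t ∈ (y⁻¹ * Λ i) • Q}.encard ≤ N := by
    have hset : {i | t ∈ (y⁻¹ * Λ i) • Q} = {i | Λ i ∈ (y * t) • Q} := by
      ext i
      change t ∈ (y⁻¹ * Λ i) • Q ↔ Λ i ∈ (y * t) • Q
      rw [mem_smul_comm_of_inv_eq hQsymm, mul_smul, ← Set.smul_mem_smul_set_iff (a := y),
        smul_eq_mul, mul_inv_cancel_left]
    obtain ⟨hfin, hncard⟩ := hsep (y * t)
    rw [hset, ← hfin.cast_ncard_eq]
    exact_mod_cast hncard
  refine tsum_le_div_mul_lintegral_of_le_on_tiles μ (S := fun i => (y⁻¹ * Λ i) • Q)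
    (fun i => (hQopen.smul _).measurableSet) (hQopen.measure_ne_zero μ ⟨1, hQone⟩)
    (measure_mono subset_closure |>.trans_lt hQcomp.measure_lt_top).ne
    (fun i => (measure_smul (μ := μ) _ Q).ge) hcount fun i t ht => ?_
  calc Φ ((Λ i)⁻¹ * x) * Ψ (y⁻¹ * Λ i)
      = Ψ (y⁻¹ * Λ i) * Φ ((y⁻¹ * Λ i)⁻¹ * (y⁻¹ * x)) := by rw [mul_comm]; group
    _ ≤ leftMaximal Q Ψ t * rightMaximal Q Φ (t⁻¹ * (y⁻¹ * x)) :=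
      mul_le_mul' (le_leftMaximal_of_mem_smul hQsymm Ψ ht)
        (apply_inv_mul_le_rightMaximal_of_mem_smul Φ ht _)

/-- Equation (2.2) of Lemma 2.4: for continuous `Φ, Ψ : G → [0,∞)` and a relatively
separated family `Λ`, the sum `Σ_λ Φ(λ⁻¹x) Ψ(y⁻¹λ)` is dominated by
`(Rel(Λ)/μ(Q)) · (M_Q Ψ ∗ M_Q^R Φ)(y⁻¹x)`. -/
theorem sum_envelope_le_convolution_maximal
    {G : Type*} [Group G] [TopologicalSpace G] [IsTopologicalGroup G]
    [LocallyCompactSpace G] [SigmaCompactSpace G]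
    [MeasurableSpace G] [BorelSpace G]
    (μ : Measure G) [μ.IsHaarMeasure]
    -- fixed symmetric open relatively compact unit neighborhood Q
    (Q : Set G) (hQopen : IsOpen Q) (hQone : (1 : G) ∈ Q) (hQsymm : Q⁻¹ = Q)
    (hQcomp : IsCompact (closure Q))
    -- continuous nonnegative (finite-valued) envelopes
    (Φ Ψ : G → ℝ≥0∞) (hΦc : Continuous Φ) (hΨc : Continuous Ψ)
    (hΦfin : ∀ x, Φ x ≠ ∞) (hΨfin : ∀ x, Ψ x ≠ ∞)
    -- a relatively separated family with Rel(Λ) ≤ N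
    {ι : Type*} (Λ : ι → G) (N : ℕ)
    (hsep : ∀ x : G, {i : ι | Λ i ∈ x • Q}.Finite ∧ {i : ι | Λ i ∈ x • Q}.ncard ≤ N)
    (x y : G) :
    ∑' i : ι, Φ ((Λ i)⁻¹ * x) * Ψ (y⁻¹ * Λ i)
      ≤ ((N : ℝ≥0∞) / μ Q) *
          ∫⁻ t, (⨆ q ∈ Q, Ψ (t * q)) * (⨆ q ∈ Q, Φ (q * (t⁻¹ * (y⁻¹ * x)))) ∂μ :=
  sum_envelope_le_convolution_maximal_general μ Q hQopen hQone hQsymm hQcomp Φ Ψ Λ N hsep x y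
end

section
/- Let G be a σ-compact locally compact group with Haar measure μ_G, Q a symmetric open relatively compact unit neighborhood, Λ a relatively separated family in G, and Θ ∈ L¹(G) continuous with M_Q(Θ^∨) ∈ L¹(G), where Θ^∨(x) = Θ(x⁻¹). Then the synthesis operator D : ℓ²(Λ) → L²(G), (c_λ) ↦ Σ_{λ∈Λ} c_λ L_λΘ (where L_λΘ(x) = Θ(λ⁻¹x)) is well-defined and bounded, with ‖D‖² ≤ (Rel(Λ)/μ_G(Q)) · ‖Θ‖_{L¹} · ‖M_Q(Θ^∨)‖_{L¹}, and the defining series converges absolutely μ_G-almost everywhere. -/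
open MeasureTheory Measure
open scoped Pointwise ENNReal NNReal

/-!
Write `g_λ(x) = |Θ(λ⁻¹x)|`. For `y ∈ λQ` we have `g_λ(x) ≤ M_Q(Θ^∨)(x⁻¹y)`, so averaging over `λQ`
and using that the sets `λQ` overlap at most `Rel(Λ)` times gives the uniform bound
`Σ_λ g_λ(x) ≤ Rel(Λ) μ(Q)⁻¹ ‖M_Q(Θ^∨)‖₁ =: K`. Cauchy–Schwarz with weights `g_λ(x)` gives
`|Σ_λ c_λ Θ(λ⁻¹x)|² ≤ K Σ_λ |c_λ|² g_λ(x)`, which is finite for every `x` and integrates, by left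
invariance of `μ`, to `K ‖Θ‖₁ ‖c‖²`.
-/

theorem ENNReal.two_mul_le_add_sq (a b : ℝ≥0∞) : 2 * a * b ≤ a ^ 2 + b ^ 2 := by
  rcases eq_or_ne a ∞ with rfl | ha
  · simp
  rcases eq_or_ne b ∞ with rfl | hb
  · simp
  lift a to ℝ≥0 using ha
  lift b to ℝ≥0 using hb
  exact_mod_cast _root_.two_mul_le_add_sq a b

theorem ENNReal.tsum_mul_sq_le {ι : Type*} (a b : ι → ℝ≥0∞) :
    (∑' i, a i * b i) ^ 2 ≤ (∑' i, a i ^ 2 * b i) * ∑' i, b i := by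
  have expand : ∀ f g : ι → ℝ≥0∞, (∑' i, f i) * (∑' j, g j) = ∑' i, ∑' j, f i * g j := by
    intro f g
    simp only [ENNReal.tsum_mul_left, ENNReal.tsum_mul_right]
  -- Expand the square as a double series and use `2ab ≤ a² + b²`: no square roots needed.
  refine (ENNReal.mul_le_mul_iff_right two_ne_zero ENNReal.ofNat_ne_top).1 ?_
  calc 2 * (∑' i, a i * b i) ^ 2
      = ∑' i, ∑' j, 2 * a i * a j * (b i * b j) := by
        simp only [sq, expand, ← ENNReal.tsum_mul_left]
        exact tsum_congr fun i => tsum_congr fun j => by ring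
    _ ≤ ∑' i, ∑' j, (a i ^ 2 + a j ^ 2) * (b i * b j) := by
        gcongr with i j
        exact ENNReal.two_mul_le_add_sq _ _
    _ = ∑' i, ∑' j, a i ^ 2 * b i * b j + ∑' i, ∑' j, a j ^ 2 * b j * b i := by
        simp only [← ENNReal.tsum_add]
        exact tsum_congr fun i => tsum_congr fun j => by ring
    _ = 2 * ((∑' i, a i ^ 2 * b i) * ∑' i, b i) := by
        rw [ENNReal.tsum_comm (f := fun i j => a j ^ 2 * b j * b i), ← expand, two_mul]

theorem ENNReal.tsum_mul_ne_top_of_sq {ι : Type*} {a b : ι → ℝ≥0∞} (ha : ∑' i, a i ^ 2 ≠ ∞)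
    (hb : ∑' i, b i ≠ ∞) : ∑' i, a i * b i ≠ ∞ := by
  have hweighted : ∑' i, a i ^ 2 * b i ≤ (∑' i, a i ^ 2) * ∑' i, b i := by
    rw [← ENNReal.tsum_mul_right]
    exact ENNReal.tsum_le_tsum fun i => by gcongr; exact ENNReal.le_tsum i
  have hsq : (∑' i, a i * b i) ^ 2 ≠ ∞ := ne_top_of_le_ne_top (by finiteness)
    ((ENNReal.tsum_mul_sq_le a b).trans (mul_le_mul_left hweighted _))
  exact (ENNReal.pow_ne_top_iff.1 hsq).resolve_right two_ne_zero

theorem enorm_tsum_sq_le {ι ε : Type*} [TopologicalSpace ε] [ESeminormedAddCommMonoid ε]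
    {f : ι → ε} {a b : ι → ℝ≥0∞} {K : ℝ≥0∞} (hf : ∀ i, ‖f i‖ₑ ≤ a i * b i) (hb : ∑' i, b i ≤ K) :
    ‖∑' i, f i‖ₑ ^ 2 ≤ (∑' i, a i ^ 2 * b i) * K :=
  calc ‖∑' i, f i‖ₑ ^ 2 ≤ (∑' i, a i * b i) ^ 2 :=
        pow_le_pow_left' (enorm_tsum_le_tsum_enorm.trans (ENNReal.tsum_le_tsum hf)) 2
    _ ≤ (∑' i, a i ^ 2 * b i) * K := (ENNReal.tsum_mul_sq_le a b).trans (mul_le_mul_right hb _)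

theorem Summable.tsum_enorm_sq_ne_top {ι E : Type*} [SeminormedAddCommGroup E] {c : ι → E}
    (hc : Summable fun i => ‖c i‖ ^ 2) : ∑' i, ‖c i‖ₑ ^ 2 ≠ ∞ := by
  simp only [← ofReal_norm, ← ENNReal.ofReal_pow (norm_nonneg _),
    ← ENNReal.ofReal_tsum_of_nonneg (fun _ => sq_nonneg _) hc]
  exact ENNReal.ofReal_ne_top

section Group

variable {G : Type*} [Group G] {ι : Type*}

noncomputable def maximalFunction (Q : Set G) (F : G → ℝ≥0∞) (x : G) : ℝ≥0∞ :=
  ⨆ q ∈ Q, F (x * q)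

theorem le_maximalFunction_of_mem_smul {Q : Set G} (hQ : Q⁻¹ = Q) (F : G → ℝ≥0∞) {a y : G}
    (hy : y ∈ a • Q) : F a ≤ maximalFunction Q F y := by
  obtain ⟨q, hq, rfl⟩ := hy
  have hq' : q⁻¹ ∈ Q := hQ ▸ Set.inv_mem_inv.2 hq
  simpa only [maximalFunction, smul_eq_mul, mul_inv_cancel_right] using
    le_biSup (fun q' => F (a * q * q')) hq'

theorem lowerSemicontinuous_maximalFunction [TopologicalSpace G] [ContinuousMul G]
    (Q : Set G) {F : G → ℝ≥0∞} (hF : LowerSemicontinuous F) :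
    LowerSemicontinuous (maximalFunction Q F) :=
  lowerSemicontinuous_biSup fun q _ => hF.comp (continuous_mul_const q)

def IsRelSeparated (Q : Set G) (N : ℕ) (Λ : ι → G) : Prop :=
  ∀ x : G, {i | Λ i ∈ x • Q}.Finite ∧ {i | Λ i ∈ x • Q}.ncard ≤ N

namespace IsRelSeparated

variable {Q : Set G} {N : ℕ} {Λ : ι → G}

theorem encard_le (hΛ : IsRelSeparated Q N Λ) (x : G) : {i | Λ i ∈ x • Q}.encard ≤ N := by
  rw [← (hΛ x).1.cast_ncard_eq]
  exact_mod_cast (hΛ x).2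

theorem smul (hΛ : IsRelSeparated Q N Λ) (a : G) : IsRelSeparated Q N (fun i => a • Λ i) := by
  intro x
  have hset : {i | a • Λ i ∈ x • Q} = {i | Λ i ∈ (a⁻¹ * x) • Q} := by
    ext i
    simp only [Set.mem_ofPred_eq, Set.mem_smul_set_iff_inv_smul_mem, smul_eq_mul, mul_inv_rev,
      inv_inv, mul_assoc]
  rw [hset]
  exact hΛ _

theorem finite_of_isCompact (hΛ : IsRelSeparated Q N Λ) [TopologicalSpace G] [ContinuousMul G]
    (hQ : IsOpen Q) (hQ1 : (1 : G) ∈ Q) {K : Set G} (hK : IsCompact K) :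
    {i | Λ i ∈ K}.Finite := by
  obtain ⟨t, -, hKt⟩ := hK.elim_nhds_subcover (fun x => x • Q) fun x _ =>
    (hQ.smul x).mem_nhds ⟨1, hQ1, mul_one x⟩
  refine (t.finite_toSet.biUnion fun x _ => (hΛ x).1).subset fun i hi => ?_
  simpa using hKt hi

theorem countable (hΛ : IsRelSeparated Q N Λ) [TopologicalSpace G] [ContinuousMul G]
    [SigmaCompactSpace G] (hQ : IsOpen Q) (hQ1 : (1 : G) ∈ Q) : Countable ι := by
  rw [← Set.countable_univ_iff]
  refine (Set.countable_iUnion fun n =>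
    (hΛ.finite_of_isCompact hQ hQ1 (isCompact_compactCovering G n)).countable).mono ?_
  intro i _
  simpa using exists_mem_compactCovering (Λ i)

theorem tsum_indicator_le (hΛ : IsRelSeparated Q N Λ) (hQ : Q⁻¹ = Q) (f : G → ℝ≥0∞) (y : G) :
    ∑' i, (Λ i • Q).indicator f y ≤ N * f y := by
  have hmem : ∀ i, y ∈ Λ i • Q ↔ Λ i ∈ y • Q := by
    intro i
    rw [Set.mem_smul_set_iff_inv_smul_mem, Set.mem_smul_set_iff_inv_smul_mem, smul_eq_mul,
      smul_eq_mul, ← Set.inv_mem_inv, hQ, mul_inv_rev, inv_inv]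
  calc ∑' i, (Λ i • Q).indicator f y
      = ∑' i, {i | Λ i ∈ y • Q}.indicator (fun _ => f y) i := by
        refine tsum_congr fun i => ?_
        classical
        simp only [Set.indicator_apply, Set.mem_ofPred_eq, hmem]
    _ = {i | Λ i ∈ y • Q}.encard * f y := by
        rw [← tsum_subtype, ENNReal.tsum_set_const]
    _ ≤ N * f y := by
        gcongr
        exact_mod_cast hΛ.encard_le y

theorem tsum_mul_measure_le (hΛ : IsRelSeparated Q N Λ) [Countable ι] [MeasurableSpace G]
    [MeasurableMul G] (μ : Measure G) [IsMulLeftInvariant μ] (hQ : MeasurableSet Q)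
    (hQsymm : Q⁻¹ = Q) {F : G → ℝ≥0∞} (hF : Measurable (maximalFunction Q F)) :
    (∑' i, F (Λ i)) * μ Q ≤ N * ∫⁻ y, maximalFunction Q F y ∂μ := by
  have hQi : ∀ i, MeasurableSet (Λ i • Q) := fun i => hQ.const_smul (Λ i)
  calc (∑' i, F (Λ i)) * μ Q
      = ∑' i, ∫⁻ _ in Λ i • Q, F (Λ i) ∂μ := by
        rw [← ENNReal.tsum_mul_right]
        exact tsum_congr fun i => by rw [setLIntegral_const, measure_smul]
    _ ≤ ∑' i, ∫⁻ y in Λ i • Q, maximalFunction Q F y ∂μ :=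
        ENNReal.tsum_le_tsum fun i => setLIntegral_mono hF fun y hy =>
          le_maximalFunction_of_mem_smul hQsymm F hy
    _ = ∫⁻ y, ∑' i, (Λ i • Q).indicator (maximalFunction Q F) y ∂μ := by
        rw [lintegral_tsum fun i => (hF.indicator (hQi i)).aemeasurable]
        exact tsum_congr fun i => (lintegral_indicator (hQi i) _).symm
    _ ≤ ∫⁻ y, N * maximalFunction Q F y ∂μ :=
        lintegral_mono (hΛ.tsum_indicator_le hQsymm _)
    _ = N * ∫⁻ y, maximalFunction Q F y ∂μ := lintegral_const_mul _ hF

theorem tsum_inv_mul_le (hΛ : IsRelSeparated Q N Λ) [Countable ι] [MeasurableSpace G]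
    [MeasurableMul G] (μ : Measure G) [IsMulLeftInvariant μ] (hQ : MeasurableSet Q)
    (hQsymm : Q⁻¹ = Q) (hQ0 : μ Q ≠ 0) {F : G → ℝ≥0∞} (hF : Measurable (maximalFunction Q F))
    (hFint : ∫⁻ y, maximalFunction Q F y ∂μ ≠ ∞) (x : G) :
    ∑' i, F (x⁻¹ * Λ i) ≤ N * (∫⁻ y, maximalFunction Q F y ∂μ) / μ Q := by
  rw [ENNReal.le_div_iff_mul_le (Or.inl hQ0)
    (Or.inr (ENNReal.mul_ne_top (ENNReal.natCast_ne_top N) hFint))]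
  exact (hΛ.smul x⁻¹).tsum_mul_measure_le μ hQ hQsymm hF

end IsRelSeparated

theorem lintegral_tsum_mul_translate [MeasurableSpace G] [MeasurableMul G] [Countable ι]
    (μ : Measure G) [IsMulLeftInvariant μ] {F : G → ℝ≥0∞}
    (hF : Measurable F) (w : ι → ℝ≥0∞) (Λ : ι → G) :
    ∫⁻ x, ∑' i, w i * F ((Λ i)⁻¹ * x) ∂μ = (∑' i, w i) * ∫⁻ x, F x ∂μ := by
  have hFi : ∀ i, Measurable fun x => F ((Λ i)⁻¹ * x) := fun i => hF.comp (measurable_const_mul _)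
  rw [lintegral_tsum fun i => ((hFi i).const_mul _).aemeasurable, ← ENNReal.tsum_mul_right]
  exact tsum_congr fun i => by rw [lintegral_const_mul _ (hFi i), lintegral_mul_left_eq_self]

end Group

theorem synthesis_operator_bounded_general
    {G : Type*} [Group G] [TopologicalSpace G] [IsTopologicalGroup G]
    [SigmaCompactSpace G]
    [MeasurableSpace G] [BorelSpace G]
    (μ : Measure G) [μ.IsHaarMeasure]
    -- fixed symmetric open relatively compact unit neighborhood Q
    (Q : Set G) (hQopen : IsOpen Q) (hQone : (1 : G) ∈ Q) (hQsymm : Q⁻¹ = Q)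
    -- a relatively separated family with Rel(Λ) ≤ N
    {ι : Type*} (Λ : ι → G) (N : ℕ)
    (hsep : ∀ x : G, {i : ι | Λ i ∈ x • Q}.Finite ∧ {i : ι | Λ i ∈ x • Q}.ncard ≤ N)
    -- Θ continuous, Θ ∈ L¹ and M_Q(Θ^∨) ∈ L¹
    (Θ : G → ℝ) (hΘc : Continuous Θ)
    (hΘv : (∫⁻ x, ⨆ q ∈ Q, (‖Θ ((x * q)⁻¹)‖₊ : ℝ≥0∞) ∂μ) ≠ ∞)
    -- an ℓ² coefficient sequence
    (c : ι → ℂ) (hc : Summable fun i => ‖c i‖ ^ 2) :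
    (∀ᵐ x ∂μ, Summable fun i => ‖c i * (Θ ((Λ i)⁻¹ * x) : ℂ)‖) ∧
      (∫⁻ x, (‖∑' i : ι, c i * (Θ ((Λ i)⁻¹ * x) : ℂ)‖₊ : ℝ≥0∞) ^ 2 ∂μ)
        ≤ ((N : ℝ≥0∞) / μ Q) * (∫⁻ x, (‖Θ x‖₊ : ℝ≥0∞) ∂μ)
            * (∫⁻ x, ⨆ q ∈ Q, (‖Θ ((x * q)⁻¹)‖₊ : ℝ≥0∞) ∂μ)
            * ∑' i : ι, (‖c i‖₊ : ℝ≥0∞) ^ 2 := by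
  simp only [← enorm_eq_nnnorm] at hΘv ⊢
  have hΛ : IsRelSeparated Q N Λ := hsep
  have := hΛ.countable hQopen hQone
  set K : ℝ≥0∞ := N * (∫⁻ x, maximalFunction Q (fun y => ‖Θ y⁻¹‖ₑ) x ∂μ) / μ Q
  have hQ0 : μ Q ≠ 0 := (hQopen.measure_pos μ ⟨1, hQone⟩).ne'
  have hK : K ≠ ∞ := ENNReal.div_ne_top (ENNReal.mul_ne_top (ENNReal.natCast_ne_top N) hΘv) hQ0
  have hM : Measurable (maximalFunction Q fun y => ‖Θ y⁻¹‖ₑ) :=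
    (lowerSemicontinuous_maximalFunction Q
      (hΘc.comp continuous_inv).enorm.lowerSemicontinuous).measurable
  have hg : ∀ x, ∑' i, ‖Θ ((Λ i)⁻¹ * x)‖ₑ ≤ K := fun x => by
    simpa [mul_inv_rev] using hΛ.tsum_inv_mul_le μ hQopen.measurableSet hQsymm hQ0 hM hΘv x
  have hterm : ∀ x i, ‖c i * (Θ ((Λ i)⁻¹ * x) : ℂ)‖ₑ = ‖c i‖ₑ * ‖Θ ((Λ i)⁻¹ * x)‖ₑ :=
    fun x i => by rw [enorm_mul, enorm_eq_nnnorm (Θ _ : ℂ), Complex.nnnorm_real, ← enorm_eq_nnnorm]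
  refine ⟨ae_of_all _ fun x => ?_, ?_⟩
  · rw [← tsum_enorm_ne_top_iff_summable_norm, tsum_congr (hterm x)]
    exact ENNReal.tsum_mul_ne_top_of_sq hc.tsum_enorm_sq_ne_top ((hg x).trans_lt hK.lt_top).ne
  calc ∫⁻ x, ‖∑' i, c i * (Θ ((Λ i)⁻¹ * x) : ℂ)‖ₑ ^ 2 ∂μ
      ≤ ∫⁻ x, (∑' i, ‖c i‖ₑ ^ 2 * ‖Θ ((Λ i)⁻¹ * x)‖ₑ) * K ∂μ :=
        lintegral_mono fun x => enorm_tsum_sq_le (fun i => (hterm x i).le) (hg x)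
    _ = (∑' i, ‖c i‖ₑ ^ 2) * (∫⁻ x, ‖Θ x‖ₑ ∂μ) * K := by
        rw [lintegral_mul_const' _ _ hK, lintegral_tsum_mul_translate μ hΘc.measurable.enorm _ Λ]
    _ = (N / μ Q) * (∫⁻ x, ‖Θ x‖ₑ ∂μ) * (∫⁻ x, maximalFunction Q (fun y => ‖Θ y⁻¹‖ₑ) x ∂μ)
          * ∑' i, ‖c i‖ₑ ^ 2 := by
        simp only [K, div_eq_mul_inv]
        ring

/-- Boundedness of the synthesis operator `D : ℓ²(Λ) → L²(G)`,
`(c_λ) ↦ Σ_λ c_λ L_λ Θ`, for a continuous `Θ ∈ L¹(G)` with `M_Q(Θ^∨) ∈ L¹(G)`: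
the defining series converges absolutely a.e., and the squared `L²`-norm of the
output is at most `(Rel(Λ)/μ(Q)) ‖Θ‖_{L¹} ‖M_Q(Θ^∨)‖_{L¹}` times `‖c‖²_{ℓ²}`. -/
theorem synthesis_operator_bounded
    {G : Type*} [Group G] [TopologicalSpace G] [IsTopologicalGroup G]
    [LocallyCompactSpace G] [SigmaCompactSpace G]
    [MeasurableSpace G] [BorelSpace G]
    (μ : Measure G) [μ.IsHaarMeasure]
    -- fixed symmetric open relatively compact unit neighborhood Q
    (Q : Set G) (hQopen : IsOpen Q) (hQone : (1 : G) ∈ Q) (hQsymm : Q⁻¹ = Q)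
    (hQcomp : IsCompact (closure Q))
    -- a relatively separated family with Rel(Λ) ≤ N
    {ι : Type*} (Λ : ι → G) (N : ℕ)
    (hsep : ∀ x : G, {i : ι | Λ i ∈ x • Q}.Finite ∧ {i : ι | Λ i ∈ x • Q}.ncard ≤ N)
    -- Θ continuous, Θ ∈ L¹ and M_Q(Θ^∨) ∈ L¹
    (Θ : G → ℝ) (hΘc : Continuous Θ) (hΘ1 : Integrable Θ μ)
    (hΘv : (∫⁻ x, ⨆ q ∈ Q, (‖Θ ((x * q)⁻¹)‖₊ : ℝ≥0∞) ∂μ) ≠ ∞)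
    -- an ℓ² coefficient sequence
    (c : ι → ℂ) (hc : Summable fun i => ‖c i‖ ^ 2) :
    (∀ᵐ x ∂μ, Summable fun i => ‖c i * (Θ ((Λ i)⁻¹ * x) : ℂ)‖) ∧
      (∫⁻ x, (‖∑' i : ι, c i * (Θ ((Λ i)⁻¹ * x) : ℂ)‖₊ : ℝ≥0∞) ^ 2 ∂μ)
        ≤ ((N : ℝ≥0∞) / μ Q) * (∫⁻ x, (‖Θ x‖₊ : ℝ≥0∞) ∂μ)
            * (∫⁻ x, ⨆ q ∈ Q, (‖Θ ((x * q)⁻¹)‖₊ : ℝ≥0∞) ∂μ)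
            * ∑' i : ι, (‖c i‖₊ : ℝ≥0∞) ^ 2 :=
  synthesis_operator_bounded_general μ Q hQopen hQone hQsymm Λ N hsep Θ hΘc hΘv c hc
end

section
/- Let G be a σ-compact locally compact group with Haar measure μ_G and Q a symmetric open relatively compact unit neighborhood. There is a constant C > 0 (one may take C = 1/μ_G(P) for a symmetric open unit neighborhood P with PP ⊆ Q) such that every measurable f : G → ℂ satisfies ‖f‖_{L∞} ≤ C · ‖M_Q f‖_{L¹}, where M_Q f(x) = ess-sup_{y∈xQ} |f(y)|. -/
open MeasureTheory Measure
open scoped Pointwise ENNReal Topology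

/-!
Pick a closed symmetric unit neighbourhood `P` with `P * P ⊆ Q`. For `y ∈ x • P` one has
`x • P ⊆ y • Q`, so the essential supremum of `|f|` on `x • P` is at most `M_Q f y`; averaging
over `y ∈ x • P` gives `μ P * ess sup_{x • P} |f| ≤ ‖M_Q f‖₁`. Since `G` is Lindelöf, countably
many translates `x • P` cover it, hence `|f| ≤ ‖M_Q f‖₁ / μ P` almost everywhere.
-/

theorem smul_subset_smul_of_mem_smul {G : Type*} [Group G] {P Q : Set G} (hPQ : P⁻¹ * P ⊆ Q)
    {x y : G} (hy : y ∈ x • P) : x • P ⊆ y • Q := by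
  obtain ⟨p, hp, rfl⟩ := hy
  rintro _ ⟨p', hp', rfl⟩
  exact ⟨p⁻¹ * p', hPQ (Set.mul_mem_mul (Set.inv_mem_inv.2 hp) hp'), by simp [mul_assoc]⟩

theorem measure_mul_essSup_restrict_smul_le_lintegral {G : Type*} [Group G] [MeasurableSpace G]
    [MeasurableMul G] {μ : Measure G} [μ.IsMulLeftInvariant] (F : G → ℝ≥0∞) {P Q : Set G}
    (hP : MeasurableSet P) (hPQ : P⁻¹ * P ⊆ Q) (x : G) :
    μ P * essSup F (μ.restrict (x • P)) ≤ ∫⁻ y, essSup F (μ.restrict (y • Q)) ∂μ :=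
  calc μ P * essSup F (μ.restrict (x • P))
      = ∫⁻ _ in x • P, essSup F (μ.restrict (x • P)) ∂μ := by
        rw [setLIntegral_const, measure_smul, mul_comm]
    _ ≤ ∫⁻ y in x • P, essSup F (μ.restrict (y • Q)) ∂μ := by
        refine lintegral_mono_ae ?_
        filter_upwards [ae_restrict_mem (hP.const_smul x)] with y hy
        exact essSup_mono_measure' (restrict_mono (smul_subset_smul_of_mem_smul hPQ hy) le_rfl)
    _ ≤ ∫⁻ y, essSup F (μ.restrict (y • Q)) ∂μ := setLIntegral_le_lintegral _ _

theorem ae_of_forall_ae_restrict_nhds {X : Type*} [TopologicalSpace X] [LindelofSpace X]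
    [MeasurableSpace X] {μ : Measure X} {p : X → Prop} (U : X → Set X) (hU : ∀ x, U x ∈ 𝓝 x)
    (h : ∀ x, ∀ᵐ y ∂μ.restrict (U x), p y) : ∀ᵐ y ∂μ, p y := by
  obtain ⟨t, ht, -, hcover⟩ := isLindelof_univ.elim_nhds_subcover U fun x _ => hU x
  rw [← restrict_univ (μ := μ), ← Set.univ_subset_iff.1 hcover]
  exact (ae_restrict_biUnion_iff U ht p).2 fun x _ => h x

theorem amalgam_embeds_into_Linfty_general
    {G : Type*} [Group G] [TopologicalSpace G] [IsTopologicalGroup G]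
    [SigmaCompactSpace G]
    [MeasurableSpace G] [BorelSpace G]
    (μ : Measure G) [μ.IsHaarMeasure]
    -- fixed symmetric open relatively compact unit neighborhood Q
    (Q : Set G) (hQopen : IsOpen Q) (hQone : (1 : G) ∈ Q)
    (hQcomp : IsCompact (closure Q)) :
    ∃ C : ℝ, 0 < C ∧ ∀ f : G → ℂ, Measurable f →
      essSup (fun x => (‖f x‖₊ : ℝ≥0∞)) μ
        ≤ ENNReal.ofReal C *
            ∫⁻ x, essSup (fun y => (‖f y‖₊ : ℝ≥0∞)) (μ.restrict (x • Q)) ∂μ := by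
  obtain ⟨P, hP, hP_closed, hP_symm, hPQ⟩ :=
    exists_closed_nhds_one_inv_eq_mul_subset (hQopen.mem_nhds hQone)
  have hP_sub : P ⊆ Q := fun p hp => by simpa using hPQ (Set.mul_mem_mul (mem_of_mem_nhds hP) hp)
  have hμP_pos : μ P ≠ 0 := (measure_pos_of_mem_nhds μ hP).ne'
  have hμP_fin : μ P ≠ ∞ :=
    ne_top_of_le_ne_top hQcomp.measure_lt_top.ne (measure_mono (hP_sub.trans subset_closure))
  have hμP_toReal : 0 < (μ P).toReal := ENNReal.toReal_pos hμP_pos hμP_fin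
  refine ⟨(μ P).toReal⁻¹, inv_pos.2 hμP_toReal, fun f _ => ?_⟩
  rw [ENNReal.ofReal_inv_of_pos hμP_toReal, ENNReal.ofReal_toReal hμP_fin]
  refine essSup_le_of_ae_le _ <| ae_of_forall_ae_restrict_nhds (fun x => x • P)
    (fun x => smul_mem_nhds_self.2 hP) fun x => ?_
  filter_upwards [ENNReal.ae_le_essSup (μ := μ.restrict (x • P)) _] with y hy
  refine hy.trans <| (ENNReal.mul_le_iff_le_inv hμP_pos hμP_fin).1 ?_
  exact measure_mul_essSup_restrict_smul_le_lintegral _ hP_closed.measurableSet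
    (by rwa [hP_symm]) x

/-- The embedding `W^L(G) ↪ L^∞(G)`: there is `C > 0` such that every measurable
`f : G → ℂ` satisfies `‖f‖_{L∞} ≤ C ‖M_Q f‖_{L¹}`, where
`M_Q f (x) = ess-sup_{y ∈ xQ} |f y|`. -/
theorem amalgam_embeds_into_Linfty
    {G : Type*} [Group G] [TopologicalSpace G] [IsTopologicalGroup G]
    [LocallyCompactSpace G] [SigmaCompactSpace G]
    [MeasurableSpace G] [BorelSpace G]
    (μ : Measure G) [μ.IsHaarMeasure]
    -- fixed symmetric open relatively compact unit neighborhood Q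
    (Q : Set G) (hQopen : IsOpen Q) (hQone : (1 : G) ∈ Q) (hQsymm : Q⁻¹ = Q)
    (hQcomp : IsCompact (closure Q)) :
    ∃ C : ℝ, 0 < C ∧ ∀ f : G → ℂ, Measurable f →
      essSup (fun x => (‖f x‖₊ : ℝ≥0∞)) μ
        ≤ ENNReal.ofReal C *
            ∫⁻ x, essSup (fun y => (‖f y‖₊ : ℝ≥0∞)) (μ.restrict (x • Q)) ∂μ :=
  amalgam_embeds_into_Linfty_general μ Q hQopen hQone hQcomp
end

section
/- Let G be a σ-compact locally compact group with Haar measure μ_G, and let (g_λ)_{λ∈Λ} ⊂ L²(G) be a family indexed by a relatively separated family Λ such that |g_λ(x)| ≤ min{Φ(λ⁻¹x), Φ(x⁻¹λ)} for all λ ∈ Λ, x ∈ G, where Φ : G → [0,∞) is continuous with Φ, M_Q(Φ^∨) ∈ L¹(G) and Φ^∨ = Φ(·⁻¹). Then (g_λ)_{λ∈Λ} is a Bessel sequence in L²(G): there exists B > 0 with Σ_{λ∈Λ} |⟨f, g_λ⟩|² ≤ B ‖f‖²_{L²} for all f ∈ L²(G). -/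
/-!
Schur's test: if kernels `k i ≥ 0` have row sums `∑ i, k i x ≤ a` and column integrals
`∫ k i ≤ b`, then Cauchy–Schwarz against the weight `k i` gives
`∑ i, (∫ F * k i)² ≤ a * b * ∫ F²`. For molecules take `k i = |g i|`. The column bound is
`∫ Φ (x⁻¹ λ) dx = ∫ Φ^∨ ≤ ∫ M_Q Φ^∨` by left invariance. For the row bound, spread the value
`Φ (λ⁻¹ x)` over the translate `x⁻¹ λ Q`, on which it is dominated by `M_Q Φ^∨`; by relative
separation at most `N` of these translates overlap, so `μ Q * ∑ λ, Φ (λ⁻¹ x) ≤ N * ‖M_Q Φ^∨‖₁`.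
-/

open MeasureTheory Measure
open scoped Pointwise ENNReal NNReal

theorem le_biSup_of_isCompact_closure {X α : Type*} [TopologicalSpace X]
    [ConditionallyCompleteLinearOrder α] [TopologicalSpace α] [OrderTopology α]
    {φ : X → α} {s : Set X} (hs : IsCompact (closure s)) (hφ : ContinuousOn φ (closure s))
    {x : X} (hx : x ∈ s) : φ x ≤ ⨆ y ∈ s, φ y := by
  refine le_ciSup₂ (f := fun y (_ : y ∈ s) => φ y)
    ((hs.image_of_continuousOn hφ).bddAbove.mono ?_) x hx
  simp only [Set.iUnion_subset_iff, Set.range_subset_iff]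
  exact fun y hy => ⟨y, subset_closure hy, rfl⟩

theorem lintegral_mul_sq_le {α : Type*} [MeasurableSpace α] {μ : Measure α} {F k : α → ℝ≥0∞}
    (hF : AEMeasurable F μ) (hk : AEMeasurable k μ) :
    (∫⁻ x, F x * k x ∂μ) ^ 2 ≤ (∫⁻ x, F x ^ 2 * k x ∂μ) * ∫⁻ x, k x ∂μ := by
  have hsq : ∀ y : ℝ≥0∞, (y ^ (2⁻¹ : ℝ)) ^ 2 = y := fun y => by
    rw [← ENNReal.rpow_natCast, ← ENNReal.rpow_mul]; norm_num
  have hHolder := ENNReal.lintegral_mul_le_Lp_mul_Lq μ Real.HolderConjugate.two_two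
    (hF.mul (hk.pow_const (2⁻¹ : ℝ))) (hk.pow_const (2⁻¹ : ℝ))
  simp only [Pi.mul_apply, ENNReal.rpow_two, mul_pow, hsq, one_div] at hHolder
  calc (∫⁻ x, F x * k x ∂μ) ^ 2
      = (∫⁻ x, F x * k x ^ (2⁻¹ : ℝ) * k x ^ (2⁻¹ : ℝ) ∂μ) ^ 2 := by
        simp_rw [mul_assoc, ← sq, hsq]
    _ ≤ ((∫⁻ x, F x ^ 2 * k x ∂μ) ^ (2⁻¹ : ℝ) * (∫⁻ x, k x ∂μ) ^ (2⁻¹ : ℝ)) ^ 2 := by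
        gcongr
    _ = (∫⁻ x, F x ^ 2 * k x ∂μ) * ∫⁻ x, k x ∂μ := by rw [mul_pow, hsq, hsq]

theorem sum_sq_lintegral_mul_le_of_schur {α ι : Type*} [MeasurableSpace α] {μ : Measure α}
    {F : α → ℝ≥0∞} {k : ι → α → ℝ≥0∞} (hF : AEMeasurable F μ) (hk : ∀ i, AEMeasurable (k i) μ)
    {s : Finset ι} {a b : ℝ≥0∞} (hrow : ∀ x, ∑ i ∈ s, k i x ≤ a)
    (hcol : ∀ i ∈ s, ∫⁻ x, k i x ∂μ ≤ b) :
    ∑ i ∈ s, (∫⁻ x, F x * k i x ∂μ) ^ 2 ≤ a * b * ∫⁻ x, F x ^ 2 ∂μ := calc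
  ∑ i ∈ s, (∫⁻ x, F x * k i x ∂μ) ^ 2 ≤ ∑ i ∈ s, (∫⁻ x, F x ^ 2 * k i x ∂μ) * b :=
    Finset.sum_le_sum fun i hi => (lintegral_mul_sq_le hF (hk i)).trans (by gcongr; exact hcol i hi)
  _ = (∫⁻ x, F x ^ 2 * ∑ i ∈ s, k i x ∂μ) * b := by
    simp_rw [← Finset.sum_mul, Finset.mul_sum]
    rw [lintegral_finsetSum' (f := fun i x => F x ^ 2 * k i x) _
      fun i _ => (hF.pow_const 2).mul (hk i)]
  _ ≤ (∫⁻ x, F x ^ 2 * a ∂μ) * b := by gcongr with x; exact hrow x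
  _ = a * b * ∫⁻ x, F x ^ 2 ∂μ := by rw [lintegral_mul_const'' _ (hF.pow_const 2)]; ring

theorem summable_and_tsum_sq_norm_integral_mul_conj_le {α ι 𝕜 : Type*} [MeasurableSpace α]
    [RCLike 𝕜] {μ : Measure α} {f : α → 𝕜} (hf : MemLp f 2 μ) {g : ι → α → 𝕜} {K : ℝ≥0}
    (h : ∀ s : Finset ι,
      ∑ i ∈ s, (∫⁻ x, ‖f x‖ₑ * ‖g i x‖ₑ ∂μ) ^ 2 ≤ K * ∫⁻ x, ‖f x‖ₑ ^ 2 ∂μ) :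
    Summable (fun i => ‖∫ x, f x * (starRingEnd 𝕜) (g i x) ∂μ‖ ^ 2) ∧
      ∑' i, ‖∫ x, f x * (starRingEnd 𝕜) (g i x) ∂μ‖ ^ 2 ≤ K * ∫ x, ‖f x‖ ^ 2 ∂μ := by
  have hL : ∫⁻ x, ‖f x‖ₑ ^ 2 ∂μ = ENNReal.ofReal (∫ x, ‖f x‖ ^ 2 ∂μ) := by
    rw [ofReal_integral_eq_lintegral_ofReal (hf.integrable_norm_pow two_ne_zero)
      (.of_forall fun x => by positivity)]
    simp [ENNReal.ofReal_pow, ofReal_norm]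
  have hsum : ∀ s : Finset ι,
      ∑ i ∈ s, ‖∫ x, f x * (starRingEnd 𝕜) (g i x) ∂μ‖ ^ 2 ≤ K * ∫ x, ‖f x‖ ^ 2 ∂μ := by
    intro s
    rw [← ENNReal.ofReal_le_ofReal_iff (by positivity),
      ENNReal.ofReal_sum_of_nonneg fun i _ => by positivity]
    calc ∑ i ∈ s, ENNReal.ofReal (‖∫ x, f x * (starRingEnd 𝕜) (g i x) ∂μ‖ ^ 2)
        ≤ ∑ i ∈ s, (∫⁻ x, ‖f x‖ₑ * ‖g i x‖ₑ ∂μ) ^ 2 := by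
          gcongr with i
          rw [ENNReal.ofReal_pow (norm_nonneg _), ofReal_norm]
          gcongr
          refine (enorm_integral_le_lintegral_enorm _).trans_eq ?_
          simp
      _ ≤ K * ∫⁻ x, ‖f x‖ₑ ^ 2 ∂μ := h s
      _ = ENNReal.ofReal (K * ∫ x, ‖f x‖ ^ 2 ∂μ) := by
          rw [hL, ENNReal.ofReal_mul K.coe_nonneg, ENNReal.ofReal_coe_nnreal]
  exact ⟨summable_of_sum_le (fun i => by positivity) hsum,
    Real.tsum_le_of_sum_le (fun i => by positivity) hsum⟩

theorem lintegral_inv_mul_le {G : Type*} [Group G] [MeasurableSpace G] [MeasurableMul G]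
    {μ : Measure G} [μ.IsMulLeftInvariant] {φ m : G → ℝ≥0∞} (hφm : ∀ z, φ z⁻¹ ≤ m z) (y : G) :
    ∫⁻ x, φ (x⁻¹ * y) ∂μ ≤ ∫⁻ z, m z ∂μ := calc
  ∫⁻ x, φ (x⁻¹ * y) ∂μ = ∫⁻ x, φ (y⁻¹ * x)⁻¹ ∂μ := by simp
  _ = ∫⁻ x, φ x⁻¹ ∂μ := lintegral_mul_left_eq_self (fun x => φ x⁻¹) y⁻¹
  _ ≤ ∫⁻ z, m z ∂μ := lintegral_mono hφm

section RelativelySeparated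

open Finset

variable {G ι : Type*} [Group G] {Q : Set G} {Λ : ι → G} {N : ℕ}

open scoped Classical in
theorem card_filter_mem_smul_le (hQsymm : Q⁻¹ = Q)
    (hsep : ∀ x : G, {i : ι | Λ i ∈ x • Q}.Finite ∧ {i : ι | Λ i ∈ x • Q}.ncard ≤ N)
    (s : Finset ι) (y : G) : #{i ∈ s | y ∈ Λ i • Q} ≤ N := by
  have hsub : (↑{i ∈ s | y ∈ Λ i • Q} : Set ι) ⊆ {i | Λ i ∈ y • Q} := by
    intro i hi
    simp only [coe_filter, Set.mem_ofPred_eq, Set.mem_smul_set_iff_inv_smul_mem, smul_eq_mul]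
      at hi ⊢
    rw [← hQsymm, Set.mem_inv]
    simpa using hi.2
  calc #{i ∈ s | y ∈ Λ i • Q} = (↑{i ∈ s | y ∈ Λ i • Q} : Set ι).ncard :=
        (Set.ncard_coe_finset _).symm
    _ ≤ {i | Λ i ∈ y • Q}.ncard := Set.ncard_le_ncard hsub (hsep y).1
    _ ≤ N := (hsep y).2

variable [MeasurableSpace G] [MeasurableMul G] {μ : Measure G} [μ.IsMulLeftInvariant]

open scoped Classical in
theorem sum_mul_measure_le_lintegral (hQ : MeasurableSet Q) (hQsymm : Q⁻¹ = Q)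
    (hsep : ∀ x : G, {i : ι | Λ i ∈ x • Q}.Finite ∧ {i : ι | Λ i ∈ x • Q}.ncard ≤ N)
    {φ m : G → ℝ≥0∞} (hφm : ∀ z, ∀ q ∈ Q, φ ((z * q)⁻¹) ≤ m z) (s : Finset ι) (x : G) :
    (∑ i ∈ s, φ ((Λ i)⁻¹ * x)) * μ Q ≤ N * ∫⁻ z, m z ∂μ := by
  set S : ι → Set G := fun i => x⁻¹ • Λ i • Q
  have hS : ∀ i, MeasurableSet (S i) := fun i => (hQ.const_smul _).const_smul _
  have hmem : ∀ i z, z ∈ S i ↔ x * z ∈ Λ i • Q := fun i z => Set.mem_inv_smul_set_iff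
  have hpt : ∀ z, ∑ i ∈ s, (S i).indicator (fun _ => φ ((Λ i)⁻¹ * x)) z ≤ N * m z := by
    intro z
    rw [sum_indicator_eq_sum_filter]
    calc ∑ i ∈ s with z ∈ S i, φ ((Λ i)⁻¹ * x) ≤ ∑ i ∈ s with z ∈ S i, m z := by
          refine sum_le_sum fun i hi => ?_
          obtain ⟨q, hq, hzq⟩ := (hmem i z).1 (mem_filter.1 hi).2
          have hq' : q⁻¹ ∈ Q := by rwa [← Set.mem_inv, hQsymm]
          obtain rfl : z = x⁻¹ * (Λ i * q) := eq_inv_mul_of_mul_eq hzq.symm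
          simpa [mul_assoc] using hφm (x⁻¹ * (Λ i * q)) q⁻¹ hq'
      _ = #{i ∈ s | x * z ∈ Λ i • Q} * m z := by
          rw [sum_const, nsmul_eq_mul]; simp only [hmem]
      _ ≤ N * m z := by gcongr; exact_mod_cast card_filter_mem_smul_le hQsymm hsep s (x * z)
  calc (∑ i ∈ s, φ ((Λ i)⁻¹ * x)) * μ Q
      = ∫⁻ z, ∑ i ∈ s, (S i).indicator (fun _ => φ ((Λ i)⁻¹ * x)) z ∂μ := by
        rw [lintegral_finsetSum _ (fun i _ => measurable_const.indicator (hS i)), sum_mul]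
        simp only [lintegral_indicator_const (hS _), S, measure_smul]
    _ ≤ ∫⁻ z, N * m z ∂μ := lintegral_mono hpt
    _ = N * ∫⁻ z, m z ∂μ := lintegral_const_mul' _ _ (ENNReal.natCast_ne_top N)

end RelativelySeparated

theorem molecules_form_bessel_sequence_general
    {G : Type*} [Group G] [TopologicalSpace G] [IsTopologicalGroup G]
    [MeasurableSpace G] [BorelSpace G]
    (μ : Measure G) [μ.IsHaarMeasure]
    -- fixed symmetric open relatively compact unit neighborhood Q
    (Q : Set G) (hQopen : IsOpen Q) (hQone : (1 : G) ∈ Q) (hQsymm : Q⁻¹ = Q)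
    (hQcomp : IsCompact (closure Q))
    -- relatively separated family
    {ι : Type*} (Λ : ι → G) (N : ℕ)
    (hsep : ∀ x : G, {i : ι | Λ i ∈ x • Q}.Finite ∧ {i : ι | Λ i ∈ x • Q}.ncard ≤ N)
    -- the molecule system and its envelope Φ, with Φ and M_Q(Φ^∨) ∈ L¹
    (g : ι → G → ℂ) (hgm : ∀ i, AEStronglyMeasurable (g i) μ)
    (Φ : G → ℝ) (hΦc : Continuous Φ)
    (hΦv : Integrable (fun x => ⨆ q ∈ Q, Φ ((x * q)⁻¹)) μ)
    (henv : ∀ i x, ‖g i x‖ ≤ min (Φ ((Λ i)⁻¹ * x)) (Φ (x⁻¹ * Λ i))) :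
    ∃ B : ℝ, 0 < B ∧ ∀ f : G → ℂ, MemLp f 2 μ →
      Summable (fun i => ‖∫ x, f x * (starRingEnd ℂ) (g i x) ∂μ‖ ^ 2) ∧
      ∑' i : ι, ‖∫ x, f x * (starRingEnd ℂ) (g i x) ∂μ‖ ^ 2
        ≤ B * ∫ x, ‖f x‖ ^ 2 ∂μ := by
  set M : G → ℝ := fun x => ⨆ q ∈ Q, Φ ((x * q)⁻¹)
  have hΦM : ∀ z, ∀ q ∈ Q, ENNReal.ofReal (Φ (z * q)⁻¹) ≤ ENNReal.ofReal (M z) :=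
    fun z q hq => ENNReal.ofReal_le_ofReal <|
      le_biSup_of_isCompact_closure (φ := fun q => Φ (z * q)⁻¹) hQcomp (by fun_prop) hq
  set C := ∫⁻ z, ENNReal.ofReal (M z) ∂μ
  have hC : C ≠ ∞ := hΦv.lintegral_lt_top.ne
  have hμQ : μ Q ≠ 0 := (hQopen.measure_pos μ ⟨1, hQone⟩).ne'
  have hg : ∀ i x, ‖g i x‖ₑ ≤ ENNReal.ofReal (Φ ((Λ i)⁻¹ * x)) ∧
      ‖g i x‖ₑ ≤ ENNReal.ofReal (Φ (x⁻¹ * Λ i)) := fun i x => by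
    rw [← ofReal_norm]
    exact ⟨ENNReal.ofReal_le_ofReal ((henv i x).trans (min_le_left _ _)),
      ENNReal.ofReal_le_ofReal ((henv i x).trans (min_le_right _ _))⟩
  have hrow : ∀ s x, ∑ i ∈ s, ‖g i x‖ₑ ≤ N * C / μ Q := fun s x => by
    rw [ENNReal.le_div_iff_mul_le (.inl hμQ) (.inr (ENNReal.mul_ne_top (by simp) hC))]
    refine le_trans ?_ (sum_mul_measure_le_lintegral (φ := fun y => ENNReal.ofReal (Φ y))
      hQopen.measurableSet hQsymm hsep hΦM s x)
    gcongr with i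
    exact (hg i x).1
  have hcol : ∀ i, ∫⁻ x, ‖g i x‖ₑ ∂μ ≤ C := fun i =>
    (lintegral_mono fun x => (hg i x).2).trans
      (lintegral_inv_mul_le (φ := fun y => ENNReal.ofReal (Φ y))
        (fun z => by simpa using hΦM z 1 hQone) (Λ i))
  have hfin : N * C / μ Q * C ≠ ∞ :=
    ENNReal.mul_ne_top (ENNReal.div_ne_top (ENNReal.mul_ne_top (by simp) hC) hμQ) hC
  refine ⟨((N * C / μ Q * C).toNNReal + 1 : ℝ≥0), by positivity, fun f hf =>
    summable_and_tsum_sq_norm_integral_mul_conj_le hf fun s => ?_⟩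
  calc _ ≤ N * C / μ Q * C * ∫⁻ x, ‖f x‖ₑ ^ 2 ∂μ :=
        sum_sq_lintegral_mul_le_of_schur hf.1.enorm (fun i => (hgm i).enorm) (hrow s)
          fun i _ => hcol i
    _ ≤ _ := by
        gcongr
        rw [← ENNReal.coe_toNNReal hfin]
        exact_mod_cast le_self_add

/-- Lemma 4.5: a system of molecules over a relatively separated family forms a
Bessel sequence in `L²(G)`. -/
theorem molecules_form_bessel_sequence
    {G : Type*} [Group G] [TopologicalSpace G] [IsTopologicalGroup G]
    [LocallyCompactSpace G] [SigmaCompactSpace G]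
    [MeasurableSpace G] [BorelSpace G]
    (μ : Measure G) [μ.IsHaarMeasure]
    -- fixed symmetric open relatively compact unit neighborhood Q
    (Q : Set G) (hQopen : IsOpen Q) (hQone : (1 : G) ∈ Q) (hQsymm : Q⁻¹ = Q)
    (hQcomp : IsCompact (closure Q))
    -- relatively separated family
    {ι : Type*} (Λ : ι → G) (N : ℕ)
    (hsep : ∀ x : G, {i : ι | Λ i ∈ x • Q}.Finite ∧ {i : ι | Λ i ∈ x • Q}.ncard ≤ N)
    -- the molecule system and its envelope Φ, with Φ and M_Q(Φ^∨) ∈ L¹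
    (g : ι → G → ℂ) (hgm : ∀ i, AEStronglyMeasurable (g i) μ)
    (Φ : G → ℝ) (hΦc : Continuous Φ) (hΦ0 : ∀ x, 0 ≤ Φ x)
    (hΦ1 : Integrable Φ μ)
    (hΦv : Integrable (fun x => ⨆ q ∈ Q, Φ ((x * q)⁻¹)) μ)
    (henv : ∀ i x, ‖g i x‖ ≤ min (Φ ((Λ i)⁻¹ * x)) (Φ (x⁻¹ * Λ i))) :
    ∃ B : ℝ, 0 < B ∧ ∀ f : G → ℂ, MemLp f 2 μ →
      Summable (fun i => ‖∫ x, f x * (starRingEnd ℂ) (g i x) ∂μ‖ ^ 2) ∧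
      ∑' i : ι, ‖∫ x, f x * (starRingEnd ℂ) (g i x) ∂μ‖ ^ 2
        ≤ B * ∫ x, ‖f x‖ ^ 2 ∂μ :=
  molecules_form_bessel_sequence_general μ Q hQopen hQone hQsymm hQcomp Λ N hsep g hgm Φ hΦc hΦv
    henv
end

section
/- Let G be a σ-compact locally compact group with Haar measure μ_G and let K ⊂ L²(G) be a reproducing kernel Hilbert space with kernel k satisfying |k(x,y)| ≤ Θ(y⁻¹x) for a nonnegative Θ ∈ L²(G) with Θ(x) = Θ(x⁻¹). Suppose α := inf_{x∈G} k(x,x) > 0 and ε ∈ (0,1), and let K ⊆ G be a measurable set such that ∫_{G∖K} Θ(z)² dμ_G(z) ≤ α ε²/4. Then for every λ ∈ G, the normalized kernel k̃_λ := k_λ/‖k_λ‖_{L²} satisfies 1 − ε/2 ≤ ‖k̃_λ · 1_{λK}‖_{L²} ≤ 1 + ε/2. -/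
/-!
The squared norm of `k_λ` is `k(λ, λ) ≥ α`, by the reproducing property. The mass of `|k_λ|²`
outside `λK` is at most `∫_{Kᶜ} Θ² ≤ α ε² / 4`, by the envelope bound and left invariance of
Haar measure, so the truncated mass is at least `(1 - ε² / 4) ‖k_λ‖² ≥ (1 - ε / 2)² ‖k_λ‖²`.
-/

open MeasureTheory
open scoped Pointwise

section LeftInvariant

variable {G : Type*} [Group G] [MeasurableSpace G] [MeasurableMul G]
  (μ : Measure G) [μ.IsMulLeftInvariant]

theorem setIntegral_smul_set_comp_inv_mul {E : Type*} [NormedAddCommGroup E] [NormedSpace ℝ E]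
    (g : G → E) (l : G) (s : Set G) :
    ∫ x in l • s, g (l⁻¹ * x) ∂μ = ∫ z in s, g z ∂μ := by
  rw [← Set.preimage_smul_inv]
  exact (measurePreserving_mul_left μ l⁻¹).setIntegral_preimage_emb
    (MeasurableEquiv.mulLeft l⁻¹).measurableEmbedding g s

theorem setIntegral_smul_set_norm_sq_le {E : Type*} [NormedAddCommGroup E] {f : G → E}
    {Θ : G → ℝ} {l : G}
    (hΘ : Integrable (fun z => Θ z ^ 2) μ) (hf : ∀ x, ‖f x‖ ≤ Θ (l⁻¹ * x)) (s : Set G) :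
    ∫ x in l • s, ‖f x‖ ^ 2 ∂μ ≤ ∫ z in s, Θ z ^ 2 ∂μ := by
  rw [← setIntegral_smul_set_comp_inv_mul μ (fun z => Θ z ^ 2) l s]
  refine integral_mono_of_nonneg (.of_forall fun x => by positivity)
    ((hΘ.comp_mul_left l⁻¹).restrict) (.of_forall fun x => ?_)
  exact pow_le_pow_left₀ (norm_nonneg _) (hf x) 2

end LeftInvariant

theorem integral_mul_conj_eq_ofReal_integral_norm_sq {X : Type*} [MeasurableSpace X]
    (μ : Measure X) (f : X → ℂ) :
    ∫ z, f z * starRingEnd ℂ (f z) ∂μ = ((∫ z, ‖f z‖ ^ 2 ∂μ : ℝ) : ℂ) := by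
  simp_rw [Complex.mul_conj']
  exact_mod_cast integral_ofReal (𝕜 := ℂ)

theorem one_sub_half_le_sqrt_div_sqrt_le_one_add_half {A N ε : ℝ} (hN : 0 < N) (hAN : A ≤ N)
    (htail : N - A ≤ N * ε ^ 2 / 4) (hε : ε ∈ Set.Icc (0 : ℝ) 2) :
    1 - ε / 2 ≤ √A / √N ∧ √A / √N ≤ 1 + ε / 2 := by
  obtain ⟨hε0, hε2⟩ := hε
  rw [← Real.sqrt_div' A hN.le]
  constructor
  · refine Real.le_sqrt_of_sq_le ?_
    rw [le_div_iff₀ hN]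
    -- `(1 - ε / 2)² = 1 - ε² / 4 - ε (2 - ε) / 2`
    nlinarith [mul_nonneg hN.le (mul_nonneg hε0 (sub_nonneg.2 hε2))]
  · have : √(A / N) ≤ 1 := Real.sqrt_le_one.2 ((div_le_one hN).2 hAN)
    linarith

theorem truncated_normalized_kernel_bounds_general
    {G : Type*} [Group G] [TopologicalSpace G] [IsTopologicalGroup G]
    [MeasurableSpace G] [BorelSpace G]
    (μ : Measure G) [μ.IsHaarMeasure]
    -- a reproducing kernel: k_x := k(·,x) ∈ L², and k(x,y) = ⟨k_y, k_x⟩_{L²}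
    (k : G → G → ℂ)
    (hkL2 : ∀ x : G, MemLp (fun z => k z x) 2 μ)
    (hrep : ∀ x y : G, k x y = ∫ z, k z y * (starRingEnd ℂ) (k z x) ∂μ)
    -- symmetric L² envelope
    (Θ : G → ℝ)
    (hΘ2 : Integrable (fun x => Θ x ^ 2) μ)
    (hloc : ∀ x y : G, ‖k x y‖ ≤ Θ (y⁻¹ * x))
    -- lower diagonal bound
    (α : ℝ) (hα0 : 0 < α) (hα : ∀ x : G, α ≤ (k x x).re)
    -- ε and the truncation set K
    (ε : ℝ) (hε : ε ∈ Set.Ioo (0 : ℝ) 1)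
    (K : Set G) (hK : MeasurableSet K)
    (hKtail : ∫ z in Kᶜ, Θ z ^ 2 ∂μ ≤ α * ε ^ 2 / 4) :
    ∀ l : G,
      1 - ε / 2 ≤
          Real.sqrt (∫ x in l • K, ‖k x l‖ ^ 2 ∂μ) /
            Real.sqrt (∫ x, ‖k x l‖ ^ 2 ∂μ) ∧
      Real.sqrt (∫ x in l • K, ‖k x l‖ ^ 2 ∂μ) /
          Real.sqrt (∫ x, ‖k x l‖ ^ 2 ∂μ) ≤ 1 + ε / 2 := by
  intro l
  obtain ⟨hε0, hε1⟩ := hε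
  have hαN : α ≤ ∫ x, ‖k x l‖ ^ 2 ∂μ := by
    simpa [hrep l l, integral_mul_conj_eq_ofReal_integral_norm_sq] using hα l
  have hlK : MeasurableSet (l • K) := hK.const_smul l
  have hsplit := integral_add_compl hlK ((hkL2 l).integrable_norm_pow two_ne_zero)
  have htail_nonneg : 0 ≤ ∫ x in (l • K)ᶜ, ‖k x l‖ ^ 2 ∂μ :=
    setIntegral_nonneg hlK.compl fun x _ => by positivity
  have htail : ∫ x in (l • K)ᶜ, ‖k x l‖ ^ 2 ∂μ ≤ α * ε ^ 2 / 4 := by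
    rw [← Set.smul_set_compl]
    exact (setIntegral_smul_set_norm_sq_le μ hΘ2 (fun x => hloc x l) Kᶜ).trans hKtail
  refine one_sub_half_le_sqrt_div_sqrt_le_one_add_half (hα0.trans_le hαN) (by linarith) ?_
    ⟨hε0.le, by linarith⟩
  nlinarith [mul_le_mul_of_nonneg_right hαN (sq_nonneg ε)]

/-- Step 1 of Lemma 6.1: for a reproducing kernel with symmetric `L²` envelope
`Θ`, lower diagonal bound `α`, and a set `K` capturing most of the mass of `Θ²`,
the truncated normalized kernels satisfy
`1 − ε/2 ≤ ‖k̃_λ · 1_{λK}‖_{L²} ≤ 1 + ε/2` for every `λ ∈ G`. -/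
theorem truncated_normalized_kernel_bounds
    {G : Type*} [Group G] [TopologicalSpace G] [IsTopologicalGroup G]
    [LocallyCompactSpace G] [SigmaCompactSpace G]
    [MeasurableSpace G] [BorelSpace G]
    (μ : Measure G) [μ.IsHaarMeasure]
    -- a reproducing kernel: k_x := k(·,x) ∈ L², and k(x,y) = ⟨k_y, k_x⟩_{L²}
    (k : G → G → ℂ)
    (hkm : ∀ x : G, Measurable fun z => k z x)
    (hkL2 : ∀ x : G, MemLp (fun z => k z x) 2 μ)
    (hrep : ∀ x y : G, k x y = ∫ z, k z y * (starRingEnd ℂ) (k z x) ∂μ)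
    -- symmetric L² envelope
    (Θ : G → ℝ) (hΘm : Measurable Θ) (hΘ0 : ∀ x, 0 ≤ Θ x)
    (hΘsym : ∀ x : G, Θ x⁻¹ = Θ x)
    (hΘ2 : Integrable (fun x => Θ x ^ 2) μ)
    (hloc : ∀ x y : G, ‖k x y‖ ≤ Θ (y⁻¹ * x))
    -- lower diagonal bound
    (α : ℝ) (hα0 : 0 < α) (hα : ∀ x : G, α ≤ (k x x).re)
    -- ε and the truncation set K
    (ε : ℝ) (hε : ε ∈ Set.Ioo (0 : ℝ) 1)
    (K : Set G) (hK : MeasurableSet K)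
    (hKtail : ∫ z in Kᶜ, Θ z ^ 2 ∂μ ≤ α * ε ^ 2 / 4) :
    ∀ l : G,
      1 - ε / 2 ≤
          Real.sqrt (∫ x in l • K, ‖k x l‖ ^ 2 ∂μ) /
            Real.sqrt (∫ x, ‖k x l‖ ^ 2 ∂μ) ∧
      Real.sqrt (∫ x in l • K, ‖k x l‖ ^ 2 ∂μ) /
          Real.sqrt (∫ x, ‖k x l‖ ^ 2 ∂μ) ≤ 1 + ε / 2 :=
  truncated_normalized_kernel_bounds_general μ k hkL2 hrep Θ hΘ2 hloc α hα0 hα ε hε K hK hKtail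
end
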